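/- arXiv:2302.02889 — 2 statements merged into one kernel-verified Lean document; each statement's English description precedes it below -/
import Mathlib

section
/- The 3×3 matrix re-factorization problem A¹(u)A²(v) = A²(y)A¹(x) is equivalent to the map φ^{1,2}: for x = (x¹,x²,x³), y = (y¹,y²,y³) in D³ with y² + y¹x² ≠ 0, the pair (u,v) = φ^{1,2}(x,y) satisfies A¹(u)A²(v) = A²(y)A¹(x); conversely, if (u,v) with v² ≠ 0 satisfies A¹(u)A²(v) = A²(y)A¹(x), then (u,v) = φ^{1,2}(x,y). -/
/-!
Multiplying out, `A¹(u)A²(v) = A²(y)A¹(x)` says that the second rows agree, which forces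
`v = (y¹x¹, y² + y¹x², y³ + y¹x³)`, and that the row vector `u` times `A²(v)` is `x`.
When `v² ≠ 0` the latter is a triangular system with the unique solution
`u² = x²(v²)⁻¹`, `u¹ = x¹ - u²v¹`, `u³ = x³ - u²v³`, which is exactly `φ^{1,2}`.
-/

variable {D : Type*} [DivisionRing D]

/-- The map `φ^{1,2}`, the `N = 3` extension of the homogeneous normalization map. -/
def phi12 : (D × D × D) × (D × D × D) → (D × D × D) × (D × D × D) :=
  fun ⟨⟨x1, x2, x3⟩, ⟨y1, y2, y3⟩⟩ =>
    ((x1 - x2 * (y2 + y1 * x2)⁻¹ * (y1 * x1),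
      x2 * (y2 + y1 * x2)⁻¹,
      x3 - x2 * (y2 + y1 * x2)⁻¹ * (y3 + y1 * x3)),
     (y1 * x1, y2 + y1 * x2, y3 + y1 * x3))

/-- The matrix `A¹(x)`: the identity with first row replaced by `(x¹, x², x³)`. -/
def A1 (x : D × D × D) : Matrix (Fin 3) (Fin 3) D :=
  !![x.1, x.2.1, x.2.2; 0, 1, 0; 0, 0, 1]

/-- The matrix `A²(x)`: the identity with second row replaced by `(x¹, x², x³)`. -/
def A2 (x : D × D × D) : Matrix (Fin 3) (Fin 3) D :=
  !![1, 0, 0; x.1, x.2.1, x.2.2; 0, 0, 1]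

/-- The row vector `u` times `A²(v)`, which is the first row of `A¹(u)A²(v)`. -/
def rowMulA2 (u v : D × D × D) : D × D × D :=
  (u.1 + u.2.1 * v.1, u.2.1 * v.2.1, u.2.1 * v.2.2 + u.2.2)

theorem A1_mul_A2 (u v : D × D × D) :
    A1 u * A2 v = !![(rowMulA2 u v).1, (rowMulA2 u v).2.1, (rowMulA2 u v).2.2;
      v.1, v.2.1, v.2.2; 0, 0, 1] := by
  rw [A1, A2, Matrix.mul_fin_three]
  simp [rowMulA2]

theorem A2_mul_A1 (y x : D × D × D) :
    A2 y * A1 x = !![x.1, x.2.1, x.2.2;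
      y.1 * x.1, y.2.1 + y.1 * x.2.1, y.2.2 + y.1 * x.2.2; 0, 0, 1] := by
  rw [A1, A2, Matrix.mul_fin_three]
  simp [add_comm]

theorem A1_mul_A2_eq_A2_mul_A1_iff (u v x y : D × D × D) :
    A1 u * A2 v = A2 y * A1 x ↔
      v = (y.1 * x.1, y.2.1 + y.1 * x.2.1, y.2.2 + y.1 * x.2.2) ∧ rowMulA2 u v = x := by
  rw [A1_mul_A2, A2_mul_A1, ← Matrix.ext_iff]
  simp [Fin.forall_fin_succ, Prod.ext_iff, and_comm]

theorem rowMulA2_eq_iff {u v x : D × D × D} (hv : v.2.1 ≠ 0) :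
    rowMulA2 u v = x ↔
      u = (x.1 - x.2.1 * v.2.1⁻¹ * v.1, x.2.1 * v.2.1⁻¹, x.2.2 - x.2.1 * v.2.1⁻¹ * v.2.2) := by
  constructor
  · rintro rfl
    simp [rowMulA2, mul_inv_cancel_right₀ hv]
  · rintro rfl
    simp [rowMulA2, inv_mul_cancel_right₀ hv]

/-- The `3 × 3` re-factorization problem `A¹(u)A²(v) = A²(y)A¹(x)` is equivalent to the
map `φ^{1,2}`. -/
theorem refactorization_iff_phi12 (x y : D × D × D) :
    (y.2.1 + y.1 * x.2.1 ≠ 0 →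
      A1 (phi12 (x, y)).1 * A2 (phi12 (x, y)).2 = A2 y * A1 x) ∧
    (∀ u v : D × D × D, v.2.1 ≠ 0 → A1 u * A2 v = A2 y * A1 x → (u, v) = phi12 (x, y)) := by
  refine ⟨fun hne => ?_, fun u v hv h => ?_⟩
  · exact (A1_mul_A2_eq_A2_mul_A1_iff _ _ x y).mpr ⟨rfl, (rowMulA2_eq_iff hne).mpr rfl⟩
  · obtain ⟨rfl, hu⟩ := (A1_mul_A2_eq_A2_mul_A1_iff u v x y).mp h
    rw [(rowMulA2_eq_iff hv).mp hu]
    rfl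
end

section
/- The conjugate map φ^{1,3} := (σ₂₃ × σ₂₃) ∘ φ^{1,2} ∘ (σ₂₃ × σ₂₃) solves the 3×3 matrix re-factorization problem with A¹ and A³: for x, y in D³ with y³ + y¹x³ ≠ 0 and (u,v) = φ^{1,3}(x,y), one has A¹(u)A³(v) = A³(y)A¹(x). Explicitly, v¹ = y¹x¹, v² = y² + y¹x², v³ = y³ + y¹x³, u³ = x³(y³ + y¹x³)⁻¹, u¹ = x¹ − x³(y³ + y¹x³)⁻¹y¹x¹, u² = x² − x³(y³ + y¹x³)⁻¹(y² + y¹x²). -/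
variable {D : Type*} [DivisionRing D]

/-- The involution `σ₂₃` interchanging the second and third components. -/
def sigma23 : D × D × D → D × D × D := fun ⟨x1, x2, x3⟩ => (x1, x3, x2)

/-- The conjugate map `φ^{1,3} = (σ₂₃ × σ₂₃) ∘ φ^{1,2} ∘ (σ₂₃ × σ₂₃)`. -/
def phi13 : (D × D × D) × (D × D × D) → (D × D × D) × (D × D × D) :=
  Prod.map sigma23 sigma23 ∘ phi12 ∘ Prod.map sigma23 sigma23

/-- The matrix `A³(x)`: the identity with third row replaced by `(x¹, x², x³)`. -/
def A3 (x : D × D × D) : Matrix (Fin 3) (Fin 3) D :=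
  !![1, 0, 0; 0, 1, 0; x.1, x.2.1, x.2.2]

theorem A1_mul_A3 (u v : D × D × D) :
    A1 u * A3 v =
      !![u.1 + u.2.2 * v.1, u.2.1 + u.2.2 * v.2.1, u.2.2 * v.2.2; 0, 1, 0; v.1, v.2.1, v.2.2] := by
  ext i j
  fin_cases i <;> fin_cases j <;> simp [A1, A3, Matrix.mul_apply, Fin.sum_univ_three]

theorem A3_mul_A1 (y x : D × D × D) :
    A3 y * A1 x =
      !![x.1, x.2.1, x.2.2; 0, 1, 0; y.1 * x.1, y.2.1 + y.1 * x.2.1, y.2.2 + y.1 * x.2.2] := by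
  ext i j
  fin_cases i <;> fin_cases j <;> simp [A1, A3, Matrix.mul_apply, Fin.sum_univ_three, add_comm]

theorem phi13_apply (x1 x2 x3 y1 y2 y3 : D) :
    phi13 ((x1, x2, x3), (y1, y2, y3)) =
      ((x1 - x3 * (y3 + y1 * x3)⁻¹ * (y1 * x1),
        x2 - x3 * (y3 + y1 * x3)⁻¹ * (y2 + y1 * x2),
        x3 * (y3 + y1 * x3)⁻¹),
       (y1 * x1, y2 + y1 * x2, y3 + y1 * x3)) :=
  rfl

/-- The conjugate map `φ^{1,3}` solves the re-factorization problem
`A¹(u)A³(v) = A³(y)A¹(x)`, and is given by the stated explicit formulas. -/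
theorem phi13_refactorization (x1 x2 x3 y1 y2 y3 : D)
    (h : y3 + y1 * x3 ≠ 0) :
    A1 (phi13 ((x1, x2, x3), (y1, y2, y3))).1 * A3 (phi13 ((x1, x2, x3), (y1, y2, y3))).2 =
      A3 (y1, y2, y3) * A1 (x1, x2, x3) ∧
    phi13 ((x1, x2, x3), (y1, y2, y3)) =
      ((x1 - x3 * (y3 + y1 * x3)⁻¹ * (y1 * x1),
        x2 - x3 * (y3 + y1 * x3)⁻¹ * (y2 + y1 * x2),
        x3 * (y3 + y1 * x3)⁻¹),
       (y1 * x1, y2 + y1 * x2, y3 + y1 * x3)) := by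
  refine ⟨?_, phi13_apply ..⟩
  rw [phi13_apply, A1_mul_A3, A3_mul_A1]
  simp only [mul_assoc, sub_add_cancel, inv_mul_cancel_right₀ h]
end
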